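/- arXiv:1612.07273 — 2 statements merged into one kernel-verified Lean document; each statement's English description precedes it below -/
import Mathlib

section
/- Let T be an endofunctor on a category C and μ : T∘T → T, η : 𝟭 → T natural transformations (where 𝟭 is the identity functor). The following are equivalent: (1) (T, μ, η) is a monad, i.e., μ ∘ᵥ Tμ = μ ∘ᵥ μT and μ ∘ᵥ ηT = μ ∘ᵥ Tη = id; (2) T is a terminal object in the rewrite category with objects Tⁿ for n ≥ 0 and morphisms the (μ,η)-derivations; that is, for every n ≥ 0 there exists a (μ,η)-derivation Tⁿ → T, and any two (μ,η)-derivations Tⁿ → T are equal. -/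
/-! Under associativity and the left unit law, every derivation `f : Tᵃ ⟶ Tᵇ` commutes with the
canonical collapses `Tⁿ ⟶ T` (multiply everything down with `μ`, starting from `η` on `T⁰`):
`f ≫ collapse b = collapse a`. It suffices to check this on the generating rules; a rule
`TⁱρTʲ` is `ρTʲ` with `T` applied `i` times, so everything reduces to `i = 0`, which is
naturality of `μ` plus one monad law. The right unit law says `collapse 1 = 𝟙`, so every
derivation `Tⁿ ⟶ T` is `collapse n`. Conversely, the three monad laws are equalities between
pairs of derivations `T³ ⟶ T` and `T ⟶ T`. -/

open CategoryTheory

universe v u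

namespace RewriteCat

variable {C : Type u} [Category.{v} C]

/-- `fpow T n` is the `n`-fold composite `Tⁿ` of the endofunctor `T`, with `T⁰ = 𝟭 C`. -/
def fpow (T : C ⥤ C) : ℕ → (C ⥤ C)
  | 0 => 𝟭 C
  | n + 1 => fpow T n ⋙ T

theorem fpow_add (T : C ⥤ C) (m n : ℕ) : fpow T (m + n) = fpow T m ⋙ fpow T n := by
  induction n with
  | zero =>
      show fpow T m = fpow T m ⋙ 𝟭 C
      rw [Functor.comp_id]
  | succ n ih =>
      show fpow T (m + n) ⋙ T = fpow T m ⋙ (fpow T n ⋙ T)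
      rw [ih, Functor.assoc]

theorem fpow_zero (T : C ⥤ C) : fpow T 0 = 𝟭 C := rfl

theorem fpow_one (T : C ⥤ C) : fpow T 1 = T := by
  show 𝟭 C ⋙ T = T
  rw [Functor.id_comp]

theorem fpow_two (T : C ⥤ C) : fpow T 2 = T ⋙ T := by
  show (𝟭 C ⋙ T) ⋙ T = T ⋙ T
  rw [Functor.id_comp]

/-- `T^{i+a+j}` decomposes as `Tʲ` (applied first), then the middle `Tᵃ`, then `Tⁱ`
(applied last, i.e. written leftmost in the string `Tⁱ Tᵃ Tʲ`). -/
theorem fpow_split (T : C ⥤ C) (i a j : ℕ) :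
    fpow T (i + a + j) = fpow T j ⋙ fpow T a ⋙ fpow T i := by
  rw [show i + a + j = j + a + i by omega, fpow_add, fpow_add, Functor.assoc]

theorem fpow_split_two (T : C ⥤ C) (i j : ℕ) :
    fpow T (i + j + 2) = fpow T j ⋙ (T ⋙ T) ⋙ fpow T i := by
  rw [show i + j + 2 = i + 2 + j by omega, fpow_split, fpow_two]

theorem fpow_split_one (T : C ⥤ C) (i j : ℕ) :
    fpow T (i + j + 1) = fpow T j ⋙ T ⋙ fpow T i := by
  rw [show i + j + 1 = i + 1 + j by omega, fpow_split, fpow_one]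

theorem fpow_split_zero (T : C ⥤ C) (i j : ℕ) :
    fpow T (i + j) = fpow T j ⋙ 𝟭 C ⋙ fpow T i := by
  rw [show i + j = i + 0 + j by omega, fpow_split, fpow_zero]

/-- The whiskered rewrite rule `TⁱμTʲ : T^{i+j+2} ⟶ T^{i+j+1}`, with components
`Tⁱ(μ_{Tʲ A})`. -/
def muRule (T : C ⥤ C) (μ : T ⋙ T ⟶ T) (i j : ℕ) :
    fpow T (i + j + 2) ⟶ fpow T (i + j + 1) :=
  eqToHom (fpow_split_two T i j) ≫
    Functor.whiskerLeft (fpow T j) (Functor.whiskerRight μ (fpow T i)) ≫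
      eqToHom (fpow_split_one T i j).symm

/-- The whiskered rewrite rule `TⁱηTʲ : T^{i+j} ⟶ T^{i+j+1}`, with components
`Tⁱ(η_{Tʲ A})`. -/
def etaRule (T : C ⥤ C) (η : 𝟭 C ⟶ T) (i j : ℕ) :
    fpow T (i + j) ⟶ fpow T (i + j + 1) :=
  eqToHom (fpow_split_zero T i j) ≫
    Functor.whiskerLeft (fpow T j) (Functor.whiskerRight η (fpow T i)) ≫
      eqToHom (fpow_split_one T i j).symm

/-- `μ`-derivations: the smallest class of natural transformations `Tᵃ ⟶ Tᵇ`
containing all identities and all whiskered rules `TⁱμTʲ`, closed under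
vertical composition. -/
inductive MuDeriv (T : C ⥤ C) (μ : T ⋙ T ⟶ T) : ∀ {a b : ℕ}, (fpow T a ⟶ fpow T b) → Prop
  | id (n : ℕ) : MuDeriv T μ (𝟙 (fpow T n))
  | rule (i j : ℕ) : MuDeriv T μ (muRule T μ i j)
  | comp {a b c : ℕ} {f : fpow T a ⟶ fpow T b} {g : fpow T b ⟶ fpow T c} :
      MuDeriv T μ f → MuDeriv T μ g → MuDeriv T μ (f ≫ g)

/-- `(μ,η)`-derivations: the smallest class of natural transformations `Tᵃ ⟶ Tᵇ`
containing all identities and all whiskered rules `TⁱμTʲ` and `TⁱηTʲ`, closed under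
vertical composition. -/
inductive MonadDeriv (T : C ⥤ C) (μ : T ⋙ T ⟶ T) (η : 𝟭 C ⟶ T) :
    ∀ {a b : ℕ}, (fpow T a ⟶ fpow T b) → Prop
  | id (n : ℕ) : MonadDeriv T μ η (𝟙 (fpow T n))
  | mu_rule (i j : ℕ) : MonadDeriv T μ η (muRule T μ i j)
  | eta_rule (i j : ℕ) : MonadDeriv T μ η (etaRule T η i j)
  | comp {a b c : ℕ} {f : fpow T a ⟶ fpow T b} {g : fpow T b ⟶ fpow T c} :
      MonadDeriv T μ η f → MonadDeriv T μ η g → MonadDeriv T μ η (f ≫ g)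

open CategoryTheory.Functor (whiskerLeft whiskerRight)

section Rules

variable {T : C ⥤ C}

theorem muRule_zero (μ : T ⋙ T ⟶ T) (j : ℕ) :
    muRule T μ 0 j = eqToHom (congrArg (fpow T) (show 0 + j + 2 = j + 2 by omega)) ≫
      whiskerLeft (fpow T j) μ ≫ eqToHom (congrArg (fpow T) (show j + 1 = 0 + j + 1 by omega)) :=
  rfl

theorem muRule_succ (μ : T ⋙ T ⟶ T) (i j : ℕ) :
    muRule T μ (i + 1) j =
      eqToHom (X := fpow T (i + 1 + j + 2)) (Y := fpow T (i + j + 2) ⋙ T)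
        (congrArg (fpow T) (show i + 1 + j + 2 = i + j + 2 + 1 by omega)) ≫
      whiskerRight (muRule T μ i j) T ≫
        eqToHom (X := fpow T (i + j + 1) ⋙ T) (Y := fpow T (i + 1 + j + 1))
          (congrArg (fpow T) (show i + j + 1 + 1 = i + 1 + j + 1 by omega)) := by
  ext A
  simp only [muRule, NatTrans.comp_app, Functor.comp_obj, eqToHom_app, Functor.whiskerLeft_app,
    Functor.whiskerRight_app, Functor.whiskerRight_comp, Category.assoc, eqToHom_map]
  -- these transports are typed at `fpow T (k + 1)`, only definitionally a composite
  erw [eqToHom_app, eqToHom_app]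
  simp only [Functor.comp_obj, eqToHom_trans, eqToHom_trans_assoc]
  rfl

theorem etaRule_zero (η : 𝟭 C ⟶ T) (j : ℕ) :
    etaRule T η 0 j = eqToHom (congrArg (fpow T) (show 0 + j = j by omega)) ≫
      whiskerLeft (fpow T j) η ≫ eqToHom (congrArg (fpow T) (show j + 1 = 0 + j + 1 by omega)) :=
  rfl

theorem etaRule_succ (η : 𝟭 C ⟶ T) (i j : ℕ) :
    etaRule T η (i + 1) j =
      eqToHom (X := fpow T (i + 1 + j)) (Y := fpow T (i + j) ⋙ T)
        (congrArg (fpow T) (show i + 1 + j = i + j + 1 by omega)) ≫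
      whiskerRight (etaRule T η i j) T ≫
        eqToHom (X := fpow T (i + j + 1) ⋙ T) (Y := fpow T (i + 1 + j + 1))
          (congrArg (fpow T) (show i + j + 1 + 1 = i + 1 + j + 1 by omega)) := by
  ext A
  simp only [etaRule, NatTrans.comp_app, Functor.comp_obj, Functor.id_obj, eqToHom_app,
    Functor.whiskerLeft_app, Functor.whiskerRight_app, Functor.whiskerRight_comp, Category.assoc,
    eqToHom_map]
  erw [eqToHom_app, eqToHom_app]
  simp only [Functor.comp_obj, eqToHom_trans, eqToHom_trans_assoc]
  rfl

/- At numeral indices the transports in `muRule` and `etaRule` are definitionally identities. -/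

theorem muRule_zero_zero (μ : T ⋙ T ⟶ T) : muRule T μ 0 0 = μ :=
  (Category.id_comp _).trans (Category.comp_id _)

theorem muRule_one_zero (μ : T ⋙ T ⟶ T) : muRule T μ 1 0 = whiskerRight μ T :=
  (Category.id_comp _).trans (Category.comp_id _)

theorem muRule_zero_one (μ : T ⋙ T ⟶ T) : muRule T μ 0 1 = whiskerLeft T μ :=
  (Category.id_comp _).trans (Category.comp_id _)

theorem etaRule_one_zero (η : 𝟭 C ⟶ T) : etaRule T η 1 0 = whiskerRight η T :=
  (Category.id_comp _).trans (Category.comp_id _)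

theorem etaRule_zero_one (η : 𝟭 C ⟶ T) : etaRule T η 0 1 = whiskerLeft T η :=
  (Category.id_comp _).trans (Category.comp_id _)

end Rules

section Collapse

variable (T : C ⥤ C) (μ : T ⋙ T ⟶ T) (η : 𝟭 C ⟶ T)

def collapse : ∀ n : ℕ, fpow T n ⟶ T
  | 0 => η
  | n + 1 => whiskerRight (collapse n) T ≫ μ

variable {T}

def Collapses {a b : ℕ} (f : fpow T a ⟶ fpow T b) : Prop :=
  f ≫ collapse T μ η b = collapse T μ η a

variable {μ η}

theorem collapse_one (hright : whiskerRight η T ≫ μ = 𝟙 T) : collapse T μ η 1 = 𝟙 T :=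
  hright

theorem Collapses.comp {a b c : ℕ} {f : fpow T a ⟶ fpow T b} {g : fpow T b ⟶ fpow T c}
    (hf : Collapses μ η f) (hg : Collapses μ η g) : Collapses μ η (f ≫ g) := by
  unfold Collapses at *
  rw [Category.assoc, hg, hf]

theorem Collapses.whiskerRight {a b : ℕ} {f : fpow T a ⟶ fpow T b} (hf : Collapses μ η f) :
    Collapses (a := a + 1) (b := b + 1) μ η (whiskerRight f T) :=
  (Functor.whiskerRight_comp_assoc f _ T μ).symm.trans
    (congrArg (fun g => Functor.whiskerRight g T ≫ μ) hf)

theorem collapses_eqToHom {a b : ℕ} (h : a = b) :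
    Collapses μ η (eqToHom (congrArg (fpow T) h)) := by
  subst h
  simp [Collapses]

theorem whiskerLeft_mu_comp_whiskerRight_comp_mu
    (hassoc : whiskerRight μ T ≫ μ = whiskerLeft T μ ≫ μ) {F : C ⥤ C} (α : F ⟶ T) :
    whiskerLeft F μ ≫ whiskerRight α T ≫ μ = whiskerRight (whiskerRight α T ≫ μ) T ≫ μ := by
  rw [Functor.whiskerLeft_comp_whiskerRight_assoc, ← hassoc, Functor.whiskerRight_comp,
    Category.assoc]
  rfl

theorem whiskerLeft_eta_comp_whiskerRight_comp_mu (hleft : whiskerLeft T η ≫ μ = 𝟙 T)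
    {F : C ⥤ C} (α : F ⟶ T) : whiskerLeft F η ≫ whiskerRight α T ≫ μ = α := by
  rw [Functor.whiskerLeft_comp_whiskerRight_assoc, hleft]
  exact Category.comp_id α

theorem collapses_muRule (hassoc : whiskerRight μ T ≫ μ = whiskerLeft T μ ≫ μ) (i j : ℕ) :
    Collapses μ η (muRule T μ i j) := by
  induction i with
  | zero =>
    have hμ : Collapses (a := j + 2) (b := j + 1) μ η (whiskerLeft (fpow T j) μ) :=
      whiskerLeft_mu_comp_whiskerRight_comp_mu hassoc (collapse T μ η j)
    rw [muRule_zero]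
    refine .comp ?_ (.comp hμ ?_) <;> exact collapses_eqToHom (by omega)
  | succ i ih =>
    rw [muRule_succ]
    refine .comp ?_ (.comp ih.whiskerRight ?_) <;> exact collapses_eqToHom (by omega)

theorem collapses_etaRule (hleft : whiskerLeft T η ≫ μ = 𝟙 T) (i j : ℕ) :
    Collapses μ η (etaRule T η i j) := by
  induction i with
  | zero =>
    have hη : Collapses (a := j) (b := j + 1) μ η (whiskerLeft (fpow T j) η) :=
      whiskerLeft_eta_comp_whiskerRight_comp_mu hleft (collapse T μ η j)
    rw [etaRule_zero]
    refine .comp ?_ (.comp hη ?_) <;> exact collapses_eqToHom (by omega)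
  | succ i ih =>
    rw [etaRule_succ]
    refine .comp ?_ (.comp ih.whiskerRight ?_) <;> exact collapses_eqToHom (by omega)

theorem MonadDeriv.collapses (hassoc : whiskerRight μ T ≫ μ = whiskerLeft T μ ≫ μ)
    (hleft : whiskerLeft T η ≫ μ = 𝟙 T) {a b : ℕ} {f : fpow T a ⟶ fpow T b}
    (hf : MonadDeriv T μ η f) : Collapses μ η f := by
  induction hf with
  | id n => exact Category.id_comp _
  | mu_rule i j => exact collapses_muRule hassoc i j
  | eta_rule i j => exact collapses_etaRule hleft i j
  | comp _ _ ihf ihg => exact ihf.comp ihg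

theorem MonadDeriv.eq_collapse (hassoc : whiskerRight μ T ≫ μ = whiskerLeft T μ ≫ μ)
    (hleft : whiskerLeft T η ≫ μ = 𝟙 T) (hright : whiskerRight η T ≫ μ = 𝟙 T) {n : ℕ}
    {f : fpow T n ⟶ fpow T 1} (hf : MonadDeriv T μ η f) : f = collapse T μ η n := by
  have h := hf.collapses hassoc hleft
  rw [Collapses, collapse_one hright] at h
  exact (Category.comp_id f).symm.trans h

end Collapse

section Converse

variable {T : C ⥤ C} {μ : T ⋙ T ⟶ T} {η : 𝟭 C ⟶ T}

theorem exists_monadDeriv_to_one : ∀ n : ℕ, ∃ f : fpow T n ⟶ fpow T 1, MonadDeriv T μ η f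
  | 0 => ⟨_, .eta_rule 0 0⟩
  | 1 => ⟨_, .id 1⟩
  | n + 2 =>
    let ⟨f, hf⟩ := exists_monadDeriv_to_one (n + 1)
    ⟨muRule T μ n 0 ≫ f, .comp (.mu_rule n 0) hf⟩

theorem monad_laws_of_monadDeriv_unique
    (huniq : ∀ n : ℕ, ∀ f g : fpow T n ⟶ fpow T 1,
      MonadDeriv T μ η f → MonadDeriv T μ η g → f = g) :
    whiskerRight μ T ≫ μ = whiskerLeft T μ ≫ μ ∧
      whiskerLeft T η ≫ μ = 𝟙 T ∧ whiskerRight η T ≫ μ = 𝟙 T := by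
  refine ⟨?_, ?_, ?_⟩
  · have h := huniq 3 _ _ (.comp (.mu_rule 1 0) (.mu_rule 0 0))
      (.comp (.mu_rule 0 1) (.mu_rule 0 0))
    rwa [muRule_one_zero, muRule_zero_one, muRule_zero_zero] at h
  · have h := huniq 1 _ _ (.comp (.eta_rule 0 1) (.mu_rule 0 0)) (.id 1)
    rwa [etaRule_zero_one, muRule_zero_zero] at h
  · have h := huniq 1 _ _ (.comp (.eta_rule 1 0) (.mu_rule 0 0)) (.id 1)
    rwa [etaRule_one_zero, muRule_zero_zero] at h

end Converse

/-- **Theorem 4.2 of Kozen, "Natural Transformations as Rewrite Rules and Monad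
Composition"**.

For an endofunctor `T` on `C` and natural transformations `μ : T∘T ⟶ T`,
`η : 𝟭 ⟶ T`, the following are equivalent:

1. `(T, μ, η)` is a monad: `μ ∘ᵥ Tμ = μ ∘ᵥ μT` and `μ ∘ᵥ ηT = μ ∘ᵥ Tη = id`
   (`Tμ = whiskerRight μ T`, `μT = whiskerLeft T μ`, `ηT = whiskerLeft T η`,
   `Tη = whiskerRight η T`);
2. `T` is a terminal object in the rewrite category whose objects are the powers
   `Tⁿ` for `n ≥ 0` and whose morphisms are the `(μ,η)`-derivations: for every
   `n ≥ 0` there exists a `(μ,η)`-derivation `Tⁿ ⟶ T`, and any two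
   `(μ,η)`-derivations `Tⁿ ⟶ T` are equal. -/
theorem monad_iff_terminal
    (T : C ⥤ C) (μ : T ⋙ T ⟶ T) (η : 𝟭 C ⟶ T) :
    (Functor.whiskerRight μ T ≫ μ = Functor.whiskerLeft T μ ≫ μ ∧
      Functor.whiskerLeft T η ≫ μ = 𝟙 T ∧ Functor.whiskerRight η T ≫ μ = 𝟙 T)
      ↔
    ((∀ n : ℕ, ∃ f : fpow T n ⟶ fpow T 1, MonadDeriv T μ η f) ∧
      (∀ n : ℕ, ∀ f g : fpow T n ⟶ fpow T 1,
        MonadDeriv T μ η f → MonadDeriv T μ η g → f = g)) := by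
  constructor
  · rintro ⟨hassoc, hleft, hright⟩
    refine ⟨exists_monadDeriv_to_one, fun n f g hf hg => ?_⟩
    rw [hf.eq_collapse hassoc hleft hright, hg.eq_collapse hassoc hleft hright]
  · rintro ⟨-, huniq⟩
    exact monad_laws_of_monadDeriv_unique huniq

end RewriteCat
end

section
/- Let (P, μᴾ, ηᴾ) and (T, μᵀ, ηᵀ) be monads on a category C, and let θ : T∘P → P∘T be a natural transformation. The following are equivalent: (1) θ satisfies the distributive laws: θ ∘ᵥ Tμᴾ = μᴾT ∘ᵥ Pθ ∘ᵥ θP, θ ∘ᵥ μᵀP = Pμᵀ ∘ᵥ θT ∘ᵥ Tθ, θ ∘ᵥ Tηᴾ = ηᴾT, and θ ∘ᵥ ηᵀP = Pηᵀ; (2) the composite P∘T is a terminal object in the rewrite category whose objects are the composites ⟦w⟧ of words w over the alphabet {P, T} and whose morphisms are the derivations; that is, for every word w over {P, T} there exists a derivation ⟦w⟧ → P∘T, and any two derivations ⟦w⟧ → P∘T are equal. -/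
open CategoryTheory

namespace MonadComp

/-- The two-letter alphabet `{P, T}`. -/
inductive Sym : Type
  | P : Sym
  | T : Sym
  deriving DecidableEq

universe v u
variable {C : Type u} [Category.{v} C]

/-- The endofunctor named by a symbol. -/
def toF (P T : C ⥤ C) : Sym → (C ⥤ C)
  | Sym.P => P
  | Sym.T => T

/-- Interpretation of a word over `{P, T}` as a composite endofunctor; the leftmost
symbol is the outermost (last applied) functor, and `⟦[]⟧ = 𝟭 C`. -/
def interp (P T : C ⥤ C) : List Sym → (C ⥤ C)
  | [] => 𝟭 C
  | s :: w => interp P T w ⋙ toF P T s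

theorem interp_append (P T : C ⥤ C) (u v : List Sym) :
    interp P T (u ++ v) = interp P T v ⋙ interp P T u := by
  induction u with
  | nil =>
      show interp P T v = interp P T v ⋙ 𝟭 C
      rw [Functor.comp_id]
  | cons s u ih =>
      show interp P T (u ++ v) ⋙ toF P T s = interp P T v ⋙ (interp P T u ⋙ toF P T s)
      rw [ih, Functor.assoc]

theorem interp_P (P T : C ⥤ C) : interp P T [Sym.P] = P := by
  show 𝟭 C ⋙ P = P; rw [Functor.id_comp]

theorem interp_T (P T : C ⥤ C) : interp P T [Sym.T] = T := by
  show 𝟭 C ⋙ T = T; rw [Functor.id_comp]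

theorem interp_PP (P T : C ⥤ C) : interp P T [Sym.P, Sym.P] = P ⋙ P := by
  show (𝟭 C ⋙ P) ⋙ P = P ⋙ P; rw [Functor.id_comp]

theorem interp_TT (P T : C ⥤ C) : interp P T [Sym.T, Sym.T] = T ⋙ T := by
  show (𝟭 C ⋙ T) ⋙ T = T ⋙ T; rw [Functor.id_comp]

/-- The word `TP` denotes `T∘P`, i.e. apply `P` first: `P ⋙ T`. -/
theorem interp_TP (P T : C ⥤ C) : interp P T [Sym.T, Sym.P] = P ⋙ T := by
  show (𝟭 C ⋙ P) ⋙ T = P ⋙ T; rw [Functor.id_comp]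

/-- The word `PT` denotes `P∘T`, i.e. apply `T` first: `T ⋙ P`. -/
theorem interp_PT (P T : C ⥤ C) : interp P T [Sym.P, Sym.T] = T ⋙ P := by
  show (𝟭 C ⋙ T) ⋙ P = T ⋙ P; rw [Functor.id_comp]

/-- The whiskering `⟦u⟧ φ ⟦v⟧ : ⟦u ++ l ++ v⟧ ⟶ ⟦u ++ r ++ v⟧` of a rewrite rule
`φ : ⟦l⟧ ⟶ ⟦r⟧` by words `u` (on the left, i.e. outside) and `v` (on the right,
i.e. inside); its component at `A` is `⟦u⟧(φ_{⟦v⟧ A})`. -/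
def ruleHom (P T : C ⥤ C) {X Y : C ⥤ C} {l r : List Sym}
    (hl : interp P T l = X) (hr : interp P T r = Y) (φ : X ⟶ Y) (u v : List Sym) :
    interp P T (u ++ l ++ v) ⟶ interp P T (u ++ r ++ v) :=
  eqToHom (by rw [interp_append, interp_append, hl]) ≫
    Functor.whiskerLeft (interp P T v) (Functor.whiskerRight φ (interp P T u)) ≫
      eqToHom (show interp P T (u ++ r ++ v) = _ by rw [interp_append, interp_append, hr]).symm

/-- Derivations in the rewrite category of Example 3.2/Lemma 4.4 of Kozen:
the smallest class of natural transformations `⟦w⟧ ⟶ ⟦w'⟧` containing all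
identities and all whiskerings `⟦u⟧φ⟦v⟧` of the rules
`μᴾ : PP → P`, `μᵀ : TT → T`, `ηᴾ : 1 → P`, `ηᵀ : 1 → T`, `θ : TP → PT`,
closed under vertical composition. -/
inductive PTDeriv (P T : C ⥤ C) (μP : P ⋙ P ⟶ P) (μT : T ⋙ T ⟶ T)
    (ηP : 𝟭 C ⟶ P) (ηT : 𝟭 C ⟶ T) (θ : P ⋙ T ⟶ T ⋙ P) :
    ∀ {w w' : List Sym}, (interp P T w ⟶ interp P T w') → Prop
  | id (w : List Sym) : PTDeriv P T μP μT ηP ηT θ (𝟙 (interp P T w))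
  | muP (u v : List Sym) :
      PTDeriv P T μP μT ηP ηT θ (ruleHom P T (interp_PP P T) (interp_P P T) μP u v)
  | muT (u v : List Sym) :
      PTDeriv P T μP μT ηP ηT θ (ruleHom P T (interp_TT P T) (interp_T P T) μT u v)
  | etaP (u v : List Sym) :
      PTDeriv P T μP μT ηP ηT θ (ruleHom P T (rfl : interp P T [] = 𝟭 C) (interp_P P T) ηP u v)
  | etaT (u v : List Sym) :
      PTDeriv P T μP μT ηP ηT θ (ruleHom P T (rfl : interp P T [] = 𝟭 C) (interp_T P T) ηT u v)
  | theta (u v : List Sym) :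
      PTDeriv P T μP μT ηP ηT θ (ruleHom P T (interp_TP P T) (interp_PT P T) θ u v)
  | comp {w₁ w₂ w₃ : List Sym} {f : interp P T w₁ ⟶ interp P T w₂}
      {g : interp P T w₂ ⟶ interp P T w₃} :
      PTDeriv P T μP μT ηP ηT θ f → PTDeriv P T μP μT ηP ηT θ g →
        PTDeriv P T μP μT ηP ηT θ (f ≫ g)


section Aux
variable {C : Type u} [Category.{v} C]
variable (P T : C ⥤ C) (μP : P ⋙ P ⟶ P) (μT : T ⋙ T ⟶ T)
  (ηP : 𝟭 C ⟶ P) (ηT : 𝟭 C ⟶ T) (θ : P ⋙ T ⟶ T ⋙ P)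

theorem ruleHom_cons {X Y : C ⥤ C} {l r : List Sym}
    (hl : interp P T l = X) (hr : interp P T r = Y) (φ : X ⟶ Y) (s : Sym) (u v : List Sym) :
    ruleHom P T hl hr φ (s :: u) v = Functor.whiskerRight (ruleHom P T hl hr φ u v) (toF P T s) := by
  subst hl; subst hr
  ext A
  simp [ruleHom, eqToHom_map, eqToHom_app, interp]
  erw [eqToHom_app, eqToHom_app]

theorem whiskerRight_id'' (w : List Sym) (s : Sym) :
    Functor.whiskerRight (𝟙 (interp P T w)) (toF P T s) = 𝟙 (interp P T (s :: w)) := by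
  ext A; simp [interp]

theorem whiskerRight_comp'' {w₁ w₂ w₃ : List Sym} (f : interp P T w₁ ⟶ interp P T w₂)
    (g : interp P T w₂ ⟶ interp P T w₃) (s : Sym) :
    Functor.whiskerRight (f ≫ g) (toF P T s)
      = Functor.whiskerRight f (toF P T s) ≫ Functor.whiskerRight g (toF P T s) := by
  ext A; simp [interp]

theorem PTDeriv.whisker_outer {w w' : List Sym} {f : interp P T w ⟶ interp P T w'}
    (h : PTDeriv P T μP μT ηP ηT θ f) (s : Sym) :
    @PTDeriv C _ P T μP μT ηP ηT θ (s :: w) (s :: w') (Functor.whiskerRight f (toF P T s)) := by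
  induction h with
  | id w => rw [whiskerRight_id'']; exact .id _
  | muP u v =>
      have h' := PTDeriv.muP (P := P) (T := T) (μT := μT) (ηP := ηP) (ηT := ηT) (θ := θ)
        (μP := μP) (s :: u) v
      rwa [ruleHom_cons] at h'
  | muT u v =>
      have h' := PTDeriv.muT (P := P) (T := T) (μT := μT) (ηP := ηP) (ηT := ηT) (θ := θ)
        (μP := μP) (s :: u) v
      rwa [ruleHom_cons] at h'
  | etaP u v =>
      have h' := PTDeriv.etaP (P := P) (T := T) (μT := μT) (ηP := ηP) (ηT := ηT) (θ := θ)
        (μP := μP) (s :: u) v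
      erw [ruleHom_cons] at h'; exact h'
  | etaT u v =>
      have h' := PTDeriv.etaT (P := P) (T := T) (μT := μT) (ηP := ηP) (ηT := ηT) (θ := θ)
        (μP := μP) (s :: u) v
      erw [ruleHom_cons] at h'; exact h'
  | theta u v =>
      have h' := PTDeriv.theta (P := P) (T := T) (μT := μT) (ηP := ηP) (ηT := ηT) (θ := θ)
        (μP := μP) (s :: u) v
      rwa [ruleHom_cons] at h'
  | comp h1 h2 ih1 ih2 => rw [whiskerRight_comp'']; exact .comp ih1 ih2

theorem exists_deriv (w : List Sym) :
    ∃ f : interp P T w ⟶ interp P T [Sym.P, Sym.T], PTDeriv P T μP μT ηP ηT θ f := by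
  induction w with
  | nil => exact ⟨_, .comp (.etaP [] []) (.etaT [Sym.P] [])⟩
  | cons s w ih =>
      obtain ⟨f, hf⟩ := ih
      cases s with
      | P =>
          refine ⟨_, PTDeriv.comp (w₂ := [Sym.P, Sym.P, Sym.T])
            (PTDeriv.whisker_outer P T μP μT ηP ηT θ hf Sym.P) (PTDeriv.muP [] [Sym.T])⟩
      | T =>
          refine ⟨_, PTDeriv.comp (w₂ := [Sym.P, Sym.T, Sym.T])
            (PTDeriv.comp (w₂ := [Sym.T, Sym.P, Sym.T])
              (PTDeriv.whisker_outer P T μP μT ηP ηT θ hf Sym.T) (PTDeriv.theta [] [Sym.T]))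
            (PTDeriv.muT [Sym.P] [])⟩
end Aux
section Aux2
variable (P T : C ⥤ C) (μP : P ⋙ P ⟶ P) (μT : T ⋙ T ⟶ T)
  (ηP : 𝟭 C ⟶ P) (ηT : 𝟭 C ⟶ T) (θ : P ⋙ T ⟶ T ⋙ P)

/-- The canonical normalization derivation `⟦w⟧ ⟶ P∘T`. -/
def nf : ∀ w : List Sym, interp P T w ⟶ T ⋙ P
  | [] => ηT ≫ Functor.whiskerLeft T ηP
  | Sym.P :: w => Functor.whiskerRight (nf w) P ≫ Functor.whiskerLeft T μP
  | Sym.T :: w => Functor.whiskerRight (nf w) T ≫ (Functor.whiskerLeft T θ ≫ Functor.whiskerRight μT P)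

theorem nf_nil_app (A : C) : (nf P T μP μT ηP ηT θ []).app A = ηT.app A ≫ ηP.app (T.obj A) := rfl

theorem nf_P_app (w : List Sym) (A : C) : (nf P T μP μT ηP ηT θ (Sym.P :: w)).app A
    = P.map ((nf P T μP μT ηP ηT θ w).app A) ≫ μP.app (T.obj A) := rfl

theorem nf_T_app (w : List Sym) (A : C) : (nf P T μP μT ηP ηT θ (Sym.T :: w)).app A
    = T.map ((nf P T μP μT ηP ηT θ w).app A) ≫ θ.app (T.obj A) ≫ P.map (μT.app A) := by
  rfl

end Aux2
section Aux3
variable (P T : C ⥤ C) (μP : P ⋙ P ⟶ P) (μT : T ⋙ T ⟶ T)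
  (ηP : 𝟭 C ⟶ P) (ηT : 𝟭 C ⟶ T) (θ : P ⋙ T ⟶ T ⋙ P)

theorem nf_PT
    (law3 : Functor.whiskerRight ηP T ≫ θ = Functor.whiskerLeft T ηP)
    (hPunitl : Functor.whiskerRight ηP P ≫ μP = 𝟙 P)
    (hTunitl : Functor.whiskerRight ηT T ≫ μT = 𝟙 T) :
    nf P T μP μT ηP ηT θ [Sym.P, Sym.T] = 𝟙 (T ⋙ P) := by
  ext A
  have h3 := NatTrans.congr_app law3 (T.obj A)
  have hP := NatTrans.congr_app hPunitl (T.obj A)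
  have hT := NatTrans.congr_app hTunitl A
  have hη := ηP.naturality (μT.app A)
  simp only [NatTrans.comp_app, Functor.whiskerRight_app, Functor.whiskerLeft_app, NatTrans.id_app,
    Functor.id_map, Functor.comp_obj] at h3 hP hT hη
  have hTnf : (nf P T μP μT ηP ηT θ [Sym.T]).app A = ηP.app (T.obj A) := by
    erw [nf_T_app, nf_nil_app, Functor.map_comp, Category.assoc,
      ← Category.assoc (T.map (ηP.app (T.obj A))), h3, ← hη, ← Category.assoc, hT]
    exact Category.id_comp _
  erw [nf_P_app, hTnf, hP]
  rfl
end Aux3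
section Aux4
variable (P T : C ⥤ C) (μP : P ⋙ P ⟶ P) (μT : T ⋙ T ⟶ T)
  (ηP : 𝟭 C ⟶ P) (ηT : 𝟭 C ⟶ T) (θ : P ⋙ T ⟶ T ⋙ P)

theorem ruleHom_nil_muP (v : List Sym) :
    ruleHom P T (interp_PP P T) (interp_P P T) μP [] v = Functor.whiskerLeft (interp P T v) μP := by
  show 𝟙 _ ≫ Functor.whiskerLeft (interp P T v) μP ≫ 𝟙 _ = _
  exact (Category.id_comp _).trans (Category.comp_id _)

theorem ruleHom_nil_muT (v : List Sym) :
    ruleHom P T (interp_TT P T) (interp_T P T) μT [] v = Functor.whiskerLeft (interp P T v) μT := by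
  show 𝟙 _ ≫ Functor.whiskerLeft (interp P T v) μT ≫ 𝟙 _ = _
  exact (Category.id_comp _).trans (Category.comp_id _)

theorem ruleHom_nil_etaP (v : List Sym) :
    ruleHom P T (rfl : interp P T [] = 𝟭 C) (interp_P P T) ηP [] v
      = Functor.whiskerLeft (interp P T v) ηP := by
  show 𝟙 _ ≫ Functor.whiskerLeft (interp P T v) ηP ≫ 𝟙 _ = _
  exact (Category.id_comp _).trans (Category.comp_id _)

theorem ruleHom_nil_etaT (v : List Sym) :
    ruleHom P T (rfl : interp P T [] = 𝟭 C) (interp_T P T) ηT [] v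
      = Functor.whiskerLeft (interp P T v) ηT := by
  show 𝟙 _ ≫ Functor.whiskerLeft (interp P T v) ηT ≫ 𝟙 _ = _
  exact (Category.id_comp _).trans (Category.comp_id _)

theorem ruleHom_nil_theta (v : List Sym) :
    ruleHom P T (interp_TP P T) (interp_PT P T) θ [] v = Functor.whiskerLeft (interp P T v) θ := by
  show 𝟙 _ ≫ Functor.whiskerLeft (interp P T v) θ ≫ 𝟙 _ = _
  exact (Category.id_comp _).trans (Category.comp_id _)

end Aux4
section Aux5
variable (P T : C ⥤ C) (μP : P ⋙ P ⟶ P) (μT : T ⋙ T ⟶ T)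
  (ηP : 𝟭 C ⟶ P) (ηT : 𝟭 C ⟶ T) (θ : P ⋙ T ⟶ T ⋙ P)

theorem base_muP (hPassoc : Functor.whiskerRight μP P ≫ μP = Functor.whiskerLeft P μP ≫ μP) (v : List Sym) :
    ruleHom P T (interp_PP P T) (interp_P P T) μP [] v ≫ nf P T μP μT ηP ηT θ (Sym.P :: v)
      = nf P T μP μT ηP ηT θ (Sym.P :: Sym.P :: v) := by
  rw [ruleHom_nil_muP]
  ext A
  erw [NatTrans.comp_app]
  set h := (nf P T μP μT ηP ηT θ v).app A with hh
  have hnat := μP.naturality h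
  have ha := NatTrans.congr_app hPassoc (T.obj A)
  simp only [NatTrans.comp_app, Functor.whiskerRight_app, Functor.whiskerLeft_app, Functor.comp_map,
    Functor.comp_obj] at hnat ha
  simp only [NatTrans.comp_app, Functor.whiskerLeft_app, nf_P_app, Functor.map_comp, Category.assoc, ← hh]
  dsimp only [interp, toF, List.nil_append, List.cons_append, Functor.comp_obj]
  simp only [Functor.map_comp, Category.assoc]
  rw [← Category.assoc, ← hnat, Category.assoc, ha]
end Aux5
section Aux6
variable (P T : C ⥤ C) (μP : P ⋙ P ⟶ P) (μT : T ⋙ T ⟶ T)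
  (ηP : 𝟭 C ⟶ P) (ηT : 𝟭 C ⟶ T) (θ : P ⋙ T ⟶ T ⋙ P)

theorem base_muT
    (law2 : Functor.whiskerLeft P μT ≫ θ = Functor.whiskerRight θ T ≫ Functor.whiskerLeft T θ ≫ Functor.whiskerRight μT P)
    (hTassoc : Functor.whiskerRight μT T ≫ μT = Functor.whiskerLeft T μT ≫ μT) (v : List Sym) :
    ruleHom P T (interp_TT P T) (interp_T P T) μT [] v ≫ nf P T μP μT ηP ηT θ (Sym.T :: v)
      = nf P T μP μT ηP ηT θ (Sym.T :: Sym.T :: v) := by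
  rw [ruleHom_nil_muT]
  ext A
  erw [NatTrans.comp_app]
  set h := (nf P T μP μT ηP ηT θ v).app A with hh
  have hnat := μT.naturality h
  have h2 := NatTrans.congr_app law2 (T.obj A)
  have hθn := θ.naturality (μT.app A)
  have ht := NatTrans.congr_app hTassoc A
  simp only [NatTrans.comp_app, Functor.whiskerRight_app, Functor.whiskerLeft_app, Functor.comp_map,
    Functor.comp_obj] at hnat h2 hθn ht
  simp only [NatTrans.comp_app, Functor.whiskerLeft_app, nf_T_app, Functor.map_comp, Category.assoc, ← hh]
  dsimp only [interp, toF, List.nil_append, List.cons_append, Functor.comp_obj]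
  simp only [Functor.map_comp, Category.assoc]
  rw [← reassoc_of% hnat, reassoc_of% h2, reassoc_of% hθn]
  simp only [← Functor.map_comp]
  rw [ht]

theorem base_theta
    (law1 : Functor.whiskerRight μP T ≫ θ = Functor.whiskerLeft P θ ≫ Functor.whiskerRight θ P ≫ Functor.whiskerLeft T μP)
    (v : List Sym) :
    ruleHom P T (interp_TP P T) (interp_PT P T) θ [] v ≫ nf P T μP μT ηP ηT θ (Sym.P :: Sym.T :: v)
      = nf P T μP μT ηP ηT θ (Sym.T :: Sym.P :: v) := by
  rw [ruleHom_nil_theta]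
  ext A
  erw [NatTrans.comp_app]
  set h := (nf P T μP μT ηP ηT θ v).app A with hh
  have hθn := θ.naturality h
  have hμn := μP.naturality (μT.app A)
  have h1 := NatTrans.congr_app law1 (T.obj A)
  simp only [NatTrans.comp_app, Functor.whiskerRight_app, Functor.whiskerLeft_app, Functor.comp_map,
    Functor.comp_obj] at hθn hμn h1
  simp only [NatTrans.comp_app, Functor.whiskerLeft_app, nf_T_app, nf_P_app, Functor.map_comp,
    Category.assoc, ← hh]
  dsimp only [interp, toF, List.nil_append, List.cons_append, Functor.comp_obj]
  simp only [Functor.map_comp, Category.assoc]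
  rw [← reassoc_of% hθn, hμn, ← reassoc_of% h1]

theorem base_etaP
    (hPunitr : Functor.whiskerLeft P ηP ≫ μP = 𝟙 P) (v : List Sym) :
    ruleHom P T (rfl : interp P T [] = 𝟭 C) (interp_P P T) ηP [] v
        ≫ nf P T μP μT ηP ηT θ (Sym.P :: v)
      = nf P T μP μT ηP ηT θ v := by
  rw [ruleHom_nil_etaP]
  ext A
  erw [NatTrans.comp_app]
  set h := (nf P T μP μT ηP ηT θ v).app A with hh
  have hn := ηP.naturality h
  have hu := NatTrans.congr_app hPunitr (T.obj A)
  simp only [NatTrans.comp_app, Functor.whiskerRight_app, Functor.whiskerLeft_app, Functor.comp_map,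
    Functor.comp_obj, Functor.id_map, NatTrans.id_app] at hn hu
  simp only [NatTrans.comp_app, Functor.whiskerLeft_app, nf_P_app, Functor.map_comp, Category.assoc, ← hh]
  dsimp only [interp, toF, List.nil_append, List.cons_append, Functor.comp_obj]
  rw [← reassoc_of% hn, hu]
  exact Category.comp_id _

theorem base_etaT
    (law4 : Functor.whiskerLeft P ηT ≫ θ = Functor.whiskerRight ηT P)
    (hTunitr : Functor.whiskerLeft T ηT ≫ μT = 𝟙 T) (v : List Sym) :
    ruleHom P T (rfl : interp P T [] = 𝟭 C) (interp_T P T) ηT [] v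
        ≫ nf P T μP μT ηP ηT θ (Sym.T :: v)
      = nf P T μP μT ηP ηT θ v := by
  rw [ruleHom_nil_etaT]
  ext A
  erw [NatTrans.comp_app]
  set h := (nf P T μP μT ηP ηT θ v).app A with hh
  have hn := ηT.naturality h
  have h4 := NatTrans.congr_app law4 (T.obj A)
  have hu := NatTrans.congr_app hTunitr A
  simp only [NatTrans.comp_app, Functor.whiskerRight_app, Functor.whiskerLeft_app, Functor.comp_map,
    Functor.comp_obj, Functor.id_map, NatTrans.id_app] at hn h4 hu
  simp only [NatTrans.comp_app, Functor.whiskerLeft_app, nf_T_app, Functor.map_comp, Category.assoc, ← hh]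
  dsimp only [interp, toF, List.nil_append, List.cons_append, Functor.comp_obj]
  rw [← reassoc_of% hn, reassoc_of% h4]
  simp only [← Functor.map_comp]
  rw [hu, P.map_id]
  exact Category.comp_id _
end Aux6
section Aux7
variable (P T : C ⥤ C) (μP : P ⋙ P ⟶ P) (μT : T ⋙ T ⟶ T)
  (ηP : 𝟭 C ⟶ P) (ηT : 𝟭 C ⟶ T) (θ : P ⋙ T ⟶ T ⋙ P)

theorem rule_compat_cons {w w' : List Sym} (g : interp P T w ⟶ interp P T w') (s : Sym)
    (h : g ≫ nf P T μP μT ηP ηT θ w' = nf P T μP μT ηP ηT θ w) :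
    Functor.whiskerRight g (toF P T s) ≫ nf P T μP μT ηP ηT θ (s :: w')
      = nf P T μP μT ηP ηT θ (s :: w) := by
  have hA := NatTrans.congr_app h
  cases s with
  | P =>
      ext A
      erw [NatTrans.comp_app]
      have := hA A
      simp only [NatTrans.comp_app] at this
      simp only [NatTrans.comp_app, Functor.whiskerRight_app, nf_P_app, toF]
      erw [← Category.assoc, ← Functor.map_comp, this]
  | T =>
      ext A
      erw [NatTrans.comp_app]
      have := hA A
      simp only [NatTrans.comp_app] at this
      simp only [NatTrans.comp_app, Functor.whiskerRight_app, nf_T_app, toF]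
      erw [← Category.assoc, ← Functor.map_comp, this]

theorem rule_compat {X Y : C ⥤ C} {l r : List Sym}
    (hl : interp P T l = X) (hr : interp P T r = Y) (φ : X ⟶ Y)
    (base : ∀ v : List Sym, ruleHom P T hl hr φ [] v ≫ nf P T μP μT ηP ηT θ (r ++ v)
      = nf P T μP μT ηP ηT θ (l ++ v))
    (u : List Sym) : ∀ v : List Sym,
    ruleHom P T hl hr φ u v ≫ nf P T μP μT ηP ηT θ (u ++ r ++ v)
      = nf P T μP μT ηP ηT θ (u ++ l ++ v) := by
  induction u with
  | nil => exact base
  | cons s u ih =>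
      intro v
      rw [ruleHom_cons]
      exact rule_compat_cons P T μP μT ηP ηT θ _ s (ih v)

theorem deriv_nf
    (law1 : Functor.whiskerRight μP T ≫ θ = Functor.whiskerLeft P θ ≫ Functor.whiskerRight θ P ≫ Functor.whiskerLeft T μP)
    (law2 : Functor.whiskerLeft P μT ≫ θ = Functor.whiskerRight θ T ≫ Functor.whiskerLeft T θ ≫ Functor.whiskerRight μT P)
    (law4 : Functor.whiskerLeft P ηT ≫ θ = Functor.whiskerRight ηT P)
    (hPassoc : Functor.whiskerRight μP P ≫ μP = Functor.whiskerLeft P μP ≫ μP)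
    (hPunitr : Functor.whiskerLeft P ηP ≫ μP = 𝟙 P)
    (hTassoc : Functor.whiskerRight μT T ≫ μT = Functor.whiskerLeft T μT ≫ μT)
    (hTunitr : Functor.whiskerLeft T ηT ≫ μT = 𝟙 T)
    {w w' : List Sym} {f : interp P T w ⟶ interp P T w'}
    (hd : PTDeriv P T μP μT ηP ηT θ f) :
    f ≫ nf P T μP μT ηP ηT θ w' = nf P T μP μT ηP ηT θ w := by
  induction hd with
  | id w => exact Category.id_comp _
  | comp h1 h2 ih1 ih2 => rw [Category.assoc, ih2, ih1]
  | muP u v => exact rule_compat P T μP μT ηP ηT θ _ _ μP (base_muP P T μP μT ηP ηT θ hPassoc) u v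
  | muT u v =>
      exact rule_compat P T μP μT ηP ηT θ _ _ μT (base_muT P T μP μT ηP ηT θ law2 hTassoc) u v
  | etaP u v =>
      exact rule_compat P T μP μT ηP ηT θ _ _ ηP (base_etaP P T μP μT ηP ηT θ hPunitr) u v
  | etaT u v =>
      exact rule_compat P T μP μT ηP ηT θ _ _ ηT (base_etaT P T μP μT ηP ηT θ law4 hTunitr) u v
  | theta u v =>
      exact rule_compat P T μP μT ηP ηT θ _ _ θ (base_theta P T μP μT ηP ηT θ law1) u v
end Aux7
section Aux8
variable (P T : C ⥤ C) (μP : P ⋙ P ⟶ P) (μT : T ⋙ T ⟶ T)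
  (ηP : 𝟭 C ⟶ P) (ηT : 𝟭 C ⟶ T) (θ : P ⋙ T ⟶ T ⋙ P)

theorem rule_r1 : ruleHom P T (interp_PP P T) (interp_P P T) μP [Sym.T] [] = Functor.whiskerRight μP T := by
  show 𝟙 _ ≫ Functor.whiskerRight μP T ≫ 𝟙 _ = _
  exact (Category.id_comp _).trans (Category.comp_id _)

theorem rule_r2 : ruleHom P T (interp_TP P T) (interp_PT P T) θ [] [] = θ := by
  show 𝟙 _ ≫ θ ≫ 𝟙 _ = _
  exact (Category.id_comp _).trans (Category.comp_id _)

theorem rule_r3 : ruleHom P T (interp_TP P T) (interp_PT P T) θ [] [Sym.P] = Functor.whiskerLeft P θ := by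
  show 𝟙 _ ≫ Functor.whiskerLeft P θ ≫ 𝟙 _ = _
  exact (Category.id_comp _).trans (Category.comp_id _)

theorem rule_r4 : ruleHom P T (interp_TP P T) (interp_PT P T) θ [Sym.P] [] = Functor.whiskerRight θ P := by
  show 𝟙 _ ≫ Functor.whiskerRight θ P ≫ 𝟙 _ = _
  exact (Category.id_comp _).trans (Category.comp_id _)

theorem rule_r5 : ruleHom P T (interp_PP P T) (interp_P P T) μP [] [Sym.T] = Functor.whiskerLeft T μP := by
  show 𝟙 _ ≫ Functor.whiskerLeft T μP ≫ 𝟙 _ = _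
  exact (Category.id_comp _).trans (Category.comp_id _)

theorem rule_r6 : ruleHom P T (interp_TT P T) (interp_T P T) μT [] [Sym.P] = Functor.whiskerLeft P μT := by
  show 𝟙 _ ≫ Functor.whiskerLeft P μT ≫ 𝟙 _ = _
  exact (Category.id_comp _).trans (Category.comp_id _)

theorem rule_r7 : ruleHom P T (interp_TP P T) (interp_PT P T) θ [Sym.T] [] = Functor.whiskerRight θ T := by
  show 𝟙 _ ≫ Functor.whiskerRight θ T ≫ 𝟙 _ = _
  exact (Category.id_comp _).trans (Category.comp_id _)

theorem rule_r8 : ruleHom P T (interp_TP P T) (interp_PT P T) θ [] [Sym.T] = Functor.whiskerLeft T θ := by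
  show 𝟙 _ ≫ Functor.whiskerLeft T θ ≫ 𝟙 _ = _
  exact (Category.id_comp _).trans (Category.comp_id _)

theorem rule_r9 : ruleHom P T (interp_TT P T) (interp_T P T) μT [Sym.P] [] = Functor.whiskerRight μT P := by
  show 𝟙 _ ≫ Functor.whiskerRight μT P ≫ 𝟙 _ = _
  exact (Category.id_comp _).trans (Category.comp_id _)

theorem rule_r10 : ruleHom P T (rfl : interp P T [] = 𝟭 C) (interp_P P T) ηP [Sym.T] []
    = Functor.whiskerRight ηP T := by
  show 𝟙 _ ≫ Functor.whiskerRight ηP T ≫ 𝟙 _ = _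
  exact (Category.id_comp _).trans (Category.comp_id _)

theorem rule_r11 : ruleHom P T (rfl : interp P T [] = 𝟭 C) (interp_P P T) ηP [] [Sym.T]
    = Functor.whiskerLeft T ηP := by
  show 𝟙 _ ≫ Functor.whiskerLeft T ηP ≫ 𝟙 _ = _
  exact (Category.id_comp _).trans (Category.comp_id _)

theorem rule_r12 : ruleHom P T (rfl : interp P T [] = 𝟭 C) (interp_T P T) ηT [] [Sym.P]
    = Functor.whiskerLeft P ηT := by
  show 𝟙 _ ≫ Functor.whiskerLeft P ηT ≫ 𝟙 _ = _
  exact (Category.id_comp _).trans (Category.comp_id _)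

theorem rule_r13 : ruleHom P T (rfl : interp P T [] = 𝟭 C) (interp_T P T) ηT [Sym.P] []
    = Functor.whiskerRight ηT P := by
  show 𝟙 _ ≫ Functor.whiskerRight ηT P ≫ 𝟙 _ = _
  exact (Category.id_comp _).trans (Category.comp_id _)

end Aux8

/-- **Lemma 4.4 of Kozen, "Natural Transformations as Rewrite Rules and Monad
Composition"**.

Let `(P, μᴾ, ηᴾ)` and `(T, μᵀ, ηᵀ)` be monads on `C` and `θ : T∘P ⟶ P∘T` a natural
transformation (in Mathlib's order, `θ : P ⋙ T ⟶ T ⋙ P`).  The following are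
equivalent:

1. `θ` satisfies the distributive laws
   `θ ∘ᵥ Tμᴾ = μᴾT ∘ᵥ Pθ ∘ᵥ θP`, `θ ∘ᵥ μᵀP = Pμᵀ ∘ᵥ θT ∘ᵥ Tθ`,
   `θ ∘ᵥ Tηᴾ = ηᴾT`, and `θ ∘ᵥ ηᵀP = Pηᵀ`;
2. `P∘T` (i.e. `⟦[P, T]⟧`) is a terminal object in the rewrite category whose
   objects are the interpretations `⟦w⟧` of words `w` over `{P, T}` and whose
   morphisms are the derivations: every `⟦w⟧` admits a derivation to `⟦[P, T]⟧`,
   and any two derivations `⟦w⟧ ⟶ ⟦[P, T]⟧` are equal.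

Whiskering conventions: `Tμᴾ = Functor.whiskerRight μP T` (components `T(μᴾ_A)`),
`μᴾT = Functor.whiskerLeft T μP` (components `μᴾ_{T A}`), `θP = Functor.whiskerLeft P θ`
(components `θ_{P A}`), `Pθ = Functor.whiskerRight θ P` (components `P(θ_A)`), etc.;
vertical composition `∘ᵥ` is `≫` read backwards. -/
theorem distributive_iff_terminal
    (P T : C ⥤ C) (μP : P ⋙ P ⟶ P) (ηP : 𝟭 C ⟶ P) (μT : T ⋙ T ⟶ T) (ηT : 𝟭 C ⟶ T)
    (θ : P ⋙ T ⟶ T ⋙ P)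
    -- `(P, μᴾ, ηᴾ)` is a monad:
    (hPassoc : Functor.whiskerRight μP P ≫ μP = Functor.whiskerLeft P μP ≫ μP)
    (hPunitr : Functor.whiskerLeft P ηP ≫ μP = 𝟙 P)
    (hPunitl : Functor.whiskerRight ηP P ≫ μP = 𝟙 P)
    -- `(T, μᵀ, ηᵀ)` is a monad:
    (hTassoc : Functor.whiskerRight μT T ≫ μT = Functor.whiskerLeft T μT ≫ μT)
    (hTunitr : Functor.whiskerLeft T ηT ≫ μT = 𝟙 T)
    (hTunitl : Functor.whiskerRight ηT T ≫ μT = 𝟙 T) :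
    (Functor.whiskerRight μP T ≫ θ = Functor.whiskerLeft P θ ≫ Functor.whiskerRight θ P ≫ Functor.whiskerLeft T μP ∧
      Functor.whiskerLeft P μT ≫ θ = Functor.whiskerRight θ T ≫ Functor.whiskerLeft T θ ≫ Functor.whiskerRight μT P ∧
      Functor.whiskerRight ηP T ≫ θ = Functor.whiskerLeft T ηP ∧
      Functor.whiskerLeft P ηT ≫ θ = Functor.whiskerRight ηT P)
      ↔
    ((∀ w : List Sym, ∃ f : interp P T w ⟶ interp P T [Sym.P, Sym.T],
        PTDeriv P T μP μT ηP ηT θ f) ∧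
      (∀ w : List Sym, ∀ f g : interp P T w ⟶ interp P T [Sym.P, Sym.T],
        PTDeriv P T μP μT ηP ηT θ f → PTDeriv P T μP μT ηP ηT θ g → f = g)) := by
  constructor
  · rintro ⟨l1, l2, l3, l4⟩
    refine ⟨exists_deriv P T μP μT ηP ηT θ, ?_⟩
    intro w f g hf hg
    have hf' := deriv_nf P T μP μT ηP ηT θ l1 l2 l4 hPassoc hPunitr hTassoc hTunitr hf
    have hg' := deriv_nf P T μP μT ηP ηT θ l1 l2 l4 hPassoc hPunitr hTassoc hTunitr hg
    have hPT := nf_PT P T μP μT ηP ηT θ l3 hPunitl hTunitl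
    have e1 : f = f ≫ nf P T μP μT ηP ηT θ [Sym.P, Sym.T] := by
      rw [hPT]; exact (Category.comp_id f).symm
    have e4 : g ≫ nf P T μP μT ηP ηT θ [Sym.P, Sym.T] = g := by rw [hPT]; exact Category.comp_id g
    exact e1.trans (hf'.trans (hg'.symm.trans e4))
  · rintro ⟨-, huniq⟩
    refine ⟨?_, ?_, ?_, ?_⟩
    · have h := huniq [Sym.T, Sym.P, Sym.P] _ _
        (PTDeriv.comp (w₂ := [Sym.T, Sym.P]) (PTDeriv.muP [Sym.T] []) (PTDeriv.theta [] []))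
        (PTDeriv.comp (w₂ := [Sym.P, Sym.P, Sym.T])
          (PTDeriv.comp (w₂ := [Sym.P, Sym.T, Sym.P])
            (PTDeriv.theta [] [Sym.P]) (PTDeriv.theta [Sym.P] []))
          (PTDeriv.muP [] [Sym.T]))
      erw [rule_r1, rule_r2, rule_r3, rule_r4, rule_r5, Category.assoc] at h
      exact h
    · have h := huniq [Sym.T, Sym.T, Sym.P] _ _
        (PTDeriv.comp (w₂ := [Sym.T, Sym.P]) (PTDeriv.muT [] [Sym.P]) (PTDeriv.theta [] []))
        (PTDeriv.comp (w₂ := [Sym.P, Sym.T, Sym.T])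
          (PTDeriv.comp (w₂ := [Sym.T, Sym.P, Sym.T])
            (PTDeriv.theta [Sym.T] []) (PTDeriv.theta [] [Sym.T]))
          (PTDeriv.muT [Sym.P] []))
      erw [rule_r6, rule_r2, rule_r7, rule_r8, rule_r9, Category.assoc] at h
      exact h
    · have h := huniq [Sym.T] _ _
        (PTDeriv.comp (w₂ := [Sym.T, Sym.P]) (PTDeriv.etaP [Sym.T] []) (PTDeriv.theta [] []))
        (PTDeriv.etaP [] [Sym.T])
      rw [rule_r10, rule_r2, rule_r11] at h
      exact h
    · have h := huniq [Sym.P] _ _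
        (PTDeriv.comp (w₂ := [Sym.T, Sym.P]) (PTDeriv.etaT [] [Sym.P]) (PTDeriv.theta [] []))
        (PTDeriv.etaT [Sym.P] [])
      rw [rule_r12, rule_r2, rule_r13] at h
      exact h


end MonadComp
end
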